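/- Let k ≥ 2. If d⁻(k−1) = d⁻(k) = d⁻(k+1), then v_k is the unique Jaconian vertex of J_l(1), where l = 2k − d⁻(k); that is, 𝕁(J_l(1)) = {k}. -/

import Mathlib

/-- The Jaco out-degree function `f`: `f 0 = 0` and, for `n ≥ 1`,
`f n = n - #{k : 1 ≤ k < n ∧ k + f k ≥ n}` (the out-degree of `v_n` in `J_∞(1)`). -/
def jacoF : ℕ → ℕ
  | 0 => 0
  | n + 1 =>
    (n + 1) - ((Finset.range (n + 1)).attach.filter
      (fun a => 1 ≤ a.1 ∧ n + 1 ≤ a.1 + jacoF a.1)).card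
  decreasing_by all_goals exact Finset.mem_range.mp a.2

/-- The in-degree `d⁻(j) = #{i : 1 ≤ i < j ∧ j ≤ i + f i}` of `v_j` in `J_∞(1)`. -/
def jacoDin (j : ℕ) : ℕ := ((Finset.Ico 1 j).filter (fun i => j ≤ i + jacoF i)).card

/-- The degree `d_n(j) = d⁻(j) + #{k : j < k ≤ n ∧ k ≤ j + f j}` of `v_j` in the
underlying undirected graph of the finite Jaco graph `J_n(1)`. -/
def jacoDeg (n j : ℕ) : ℕ :=
  jacoDin j + ((Finset.Ioc j n).filter (fun k => k ≤ j + jacoF j)).card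

/-- The maximum degree `Δ(J_n(1)) = max_{1 ≤ j ≤ n} d_n(j)`. -/
def jacoDelta (n : ℕ) : ℕ := (Finset.Icc 1 n).sup (jacoDeg n)

/-- The Jaconian set `𝕁(J_n(1)) = {j : 1 ≤ j ≤ n ∧ d_n(j) = Δ(J_n(1))}`. -/
def jacoJ (n : ℕ) : Finset ℕ := (Finset.Icc 1 n).filter (fun j => jacoDeg n j = jacoDelta n)

/-! In `J_l(1)` with `l = k + f(k) = 2k − d⁻(k)` the vertex `v_k` is adjacent to all earlier
vertices that reach it and to every later vertex, so its degree is `d⁻(k) + f(k) = k`. An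
earlier vertex `v_j` has degree at most `d⁻(j) + f(j) = j < k`. A later vertex `v_j` reaches
past `v_l`, since `f` is monotone and `f(k+1) = f(k) + 1` by `d⁻(k) = d⁻(k+1)`; hence its
degree is `d⁻(j) + (l − j) = k + f(k) − f(j) < k`. -/

lemma jacoDin_le_sub_one (n : ℕ) : jacoDin n ≤ n - 1 :=
  (Finset.card_filter_le _ _).trans (Nat.card_Ico 1 n).le

lemma jacoF_eq_sub_jacoDin (n : ℕ) : jacoF n = n - jacoDin n := by
  cases n with
  | zero => simp [jacoF, jacoDin]
  | succ m =>
    rw [jacoF, jacoDin, Finset.filter_attach (fun a => 1 ≤ a ∧ m + 1 ≤ a + jacoF a),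
      Finset.card_map, Finset.card_attach]
    congr 2
    ext x
    simp only [Finset.mem_filter, Finset.mem_range, Finset.mem_Ico]
    tauto

lemma jacoDin_add_jacoF (n : ℕ) : jacoDin n + jacoF n = n := by
  have := jacoDin_le_sub_one n
  rw [jacoF_eq_sub_jacoDin]
  omega

lemma jacoDin_succ_le (n : ℕ) : jacoDin (n + 1) ≤ jacoDin n + 1 := by
  have hsub : (Finset.Ico 1 (n + 1)).filter (fun i => n + 1 ≤ i + jacoF i) ⊆
      insert n ((Finset.Ico 1 n).filter (fun i => n ≤ i + jacoF i)) := by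
    intro x hx
    simp only [Finset.mem_filter, Finset.mem_Ico] at hx
    simp only [Finset.mem_insert, Finset.mem_filter, Finset.mem_Ico]
    omega
  exact (Finset.card_le_card hsub).trans (Finset.card_insert_le _ _)

lemma jacoF_monotone : Monotone jacoF := by
  refine monotone_nat_of_le_succ fun n => ?_
  have := jacoDin_succ_le n
  have := jacoDin_add_jacoF n
  have := jacoDin_add_jacoF (n + 1)
  omega

lemma jacoDeg_eq (n j : ℕ) : jacoDeg n j = jacoDin j + (min (j + jacoF j) n - j) := by
  have : (Finset.Ioc j n).filter (fun k => k ≤ j + jacoF j) =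
      Finset.Ioc j (min (j + jacoF j) n) := by
    ext x
    simp only [Finset.mem_filter, Finset.mem_Ioc, le_min_iff]
    omega
  rw [jacoDeg, this, Nat.card_Ioc]

lemma jacoDeg_le_self (n j : ℕ) : jacoDeg n j ≤ j := by
  have := jacoDin_add_jacoF j
  rw [jacoDeg_eq]
  omega

lemma jacoDeg_add_jacoF_self (k : ℕ) : jacoDeg (k + jacoF k) k = k := by
  have := jacoDin_add_jacoF k
  rw [jacoDeg_eq]
  omega

lemma jacoDeg_add_jacoF_lt {k j : ℕ} (hkj : k < j) (hj : j ≤ k + jacoF k)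
    (hf : jacoF k < jacoF j) :
    jacoDeg (k + jacoF k) j < k := by
  have := jacoDin_add_jacoF j
  rw [jacoDeg_eq]
  omega

lemma jacoJ_eq_singleton {n k : ℕ} (hk : k ∈ Finset.Icc 1 n)
    (hlt : ∀ j ∈ Finset.Icc 1 n, j ≠ k → jacoDeg n j < jacoDeg n k) : jacoJ n = {k} := by
  have hdelta : jacoDelta n = jacoDeg n k := by
    refine le_antisymm (Finset.sup_le fun j hj => ?_) (Finset.le_sup hk)
    obtain rfl | hjk := eq_or_ne j k
    · exact le_rfl
    · exact (hlt j hj hjk).le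
  ext j
  simp only [jacoJ, Finset.mem_filter, Finset.mem_singleton, hdelta]
  constructor
  · rintro ⟨hj, hdeg⟩
    by_contra hjk
    exact (hlt j hj hjk).ne hdeg
  · rintro rfl
    exact ⟨hk, rfl⟩

theorem stmt_9_general (k : ℕ) (hk : 2 ≤ k)
    (h2 : jacoDin k = jacoDin (k + 1)) :
    jacoJ (2 * k - jacoDin k) = {k} := by
  have hfk := jacoDin_add_jacoF k
  have hfk1 := jacoDin_add_jacoF (k + 1)
  have hl : 2 * k - jacoDin k = k + jacoF k := by omega
  rw [hl]
  refine jacoJ_eq_singleton (Finset.mem_Icc.mpr ⟨by omega, by omega⟩) fun j hj hjk => ?_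
  rw [jacoDeg_add_jacoF_self]
  rcases hjk.lt_or_gt with hjk | hkj
  · exact (jacoDeg_le_self _ j).trans_lt hjk
  · have hmono := jacoF_monotone (show k + 1 ≤ j by omega)
    exact jacoDeg_add_jacoF_lt hkj (Finset.mem_Icc.mp hj).2 (by omega)

/-- If `d⁻(k-1) = d⁻(k) = d⁻(k+1)`, then `v_k` is the unique Jaconian vertex of
`J_l(1)` where `l = 2k - d⁻(k)`. -/
theorem stmt_9 (k : ℕ) (hk : 2 ≤ k)
    (h1 : jacoDin (k - 1) = jacoDin k) (h2 : jacoDin k = jacoDin (k + 1)) :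
    jacoJ (2 * k - jacoDin k) = {k} :=
  stmt_9_general k hk h2
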